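/- arXiv:2407.07386 — 2 statements merged into one kernel-verified Lean document; each statement's English description precedes it below -/
import Mathlib

section
/- New clearing price after adding one bid: Let B be a multiset of real bids with |B| ≥ k + 1, let b_k and b_{k+1} denote respectively the k-th and (k+1)-th largest elements of B, and let b be a new bid with b > b_{k+1}. Then the (k+1)-th largest element of the multiset B + {b} equals min b b_k. -/
/-!
Sorting `b ::ₘ B` amounts to inserting `b` into the decreasing list of `B`. As `b` beats the
`(k+1)`-th entry, it lands at one of the first `k + 1` positions, so the new `(k+1)`-th entry is
`b` itself if it lands last among those, and the old `k`-th entry, pushed down one place,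
otherwise; in both cases it is the smaller of the two.
-/

/-- The `m`-th largest element of a multiset of bids: the `m`-th entry
(1-indexed) of the multiset sorted in decreasing order. -/
noncomputable def kthLargest (B : Multiset ℝ) (m : ℕ) : ℝ :=
  (B.sort (· ≥ ·)).getD (m - 1) 0

theorem Multiset.sort_cons_eq_orderedInsert {α : Type*} (r : α → α → Prop) [DecidableRel r]
    [IsTrans α r] [Std.Antisymm r] [Std.Total r] (a : α) (s : Multiset α) :
    (a ::ₘ s).sort r = (s.sort r).orderedInsert r a :=
  Quot.inductionOn s fun _ => by simp [List.mergeSort_eq_insertionSort]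

namespace List

theorem Pairwise.getD_succ_orderedInsert_ge {α : Type*} [LinearOrder α] {l : List α}
    (hl : l.Pairwise (· ≥ ·)) {b d : α} {n : ℕ} (hb : l.getD (n + 1) d < b) :
    (l.orderedInsert (· ≥ ·) b).getD (n + 1) d = min b (l.getD n d) := by
  induction l generalizing n with
  | nil => simpa using (min_eq_right hb.le).symm
  | cons x t ih =>
    by_cases hxb : x ≤ b
    · have hle : (x :: t).getD n d ≤ b := by
        rcases lt_or_ge n (x :: t).length with hn | hn
        · rw [getD_eq_getElem _ _ hn]
          rcases n with _ | m
          · exact hxb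
          · exact ((pairwise_cons.mp hl).1 _ (getElem_mem _)).trans hxb
        · rw [getD_eq_default _ _ (by omega)] at hb
          rw [getD_eq_default _ _ hn]
          exact hb.le
      rw [orderedInsert_cons_of_le (· ≥ ·) t hxb, getD_cons_succ, min_eq_right hle]
    · rw [orderedInsert_of_not_le (· ≥ ·) t hxb]
      rcases n with _ | m
      · cases t with
        | nil => simpa using (not_le.mp hxb).le
        | cons y t =>
          rw [getD_cons_succ, getD_cons_zero] at hb
          simp [orderedInsert_cons_of_le (· ≥ ·) t hb.le, (not_le.mp hxb).le]
      · rw [getD_cons_succ, getD_cons_succ, ih (pairwise_cons.mp hl).2 hb]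

end List

theorem clearing_price_after_adding_bid_general (k : ℕ) (hk : 1 ≤ k) (B : Multiset ℝ)
    (b : ℝ)
    (hb : kthLargest B (k + 1) < b) :
    kthLargest (B + {b}) (k + 1) = min b (kthLargest B k) := by
  obtain ⟨n, rfl⟩ : ∃ n, k = n + 1 := ⟨k - 1, by omega⟩
  simp only [kthLargest, Nat.add_sub_cancel] at hb ⊢
  rw [Multiset.add_comm, Multiset.singleton_add, Multiset.sort_cons_eq_orderedInsert]
  exact (Multiset.pairwise_sort _ _).getD_succ_orderedInsert_ge hb

/-- New clearing price after adding one bid: if the new bid `b` exceeds the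
`(k+1)`-th largest bid of `B`, the `(k+1)`-th largest bid of `B + {b}`
equals `min b b_k`, where `b_k` is the `k`-th largest bid of `B`. -/
theorem clearing_price_after_adding_bid (k : ℕ) (hk : 1 ≤ k) (B : Multiset ℝ)
    (hcard : k + 1 ≤ Multiset.card B) (b : ℝ)
    (hb : kthLargest B (k + 1) < b) :
    kthLargest (B + {b}) (k + 1) = min b (kthLargest B k) :=
  clearing_price_after_adding_bid_general k hk B b hb
end

section
/- Strict part of Proposition 4: Let B be a multiset of real bids with |B| ≥ k + 1, let b_k and b_{k+1} denote respectively the k-th and (k+1)-th largest elements of B, and let b be a speculator's bid. If b > b_{k+1} and b_k > b_{k+1}, then the clearing price of B + {b} for k units is strictly greater than the clearing price of B for k units: the (k+1)-th largest element of B + {b} is strictly greater than b_{k+1}. -/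
namespace List

variable {α : Type*} [LinearOrder α] {l : List α}

theorem SortedGE.lt_getElem_iff_lt_countP (hl : l.SortedGE) (t : α) {n : ℕ}
    (hn : n < l.length) : t < l[n] ↔ n < l.countP (t < ·) := by
  have hsplit := congrArg (countP (t < ·)) (take_append_drop n l)
  rw [countP_append] at hsplit
  constructor
  · intro h
    have hprefix : ∀ x ∈ l.take (n + 1), t < x := by
      intro x hx
      obtain ⟨i, hi, rfl⟩ := getElem_of_mem hx
      rw [getElem_take]
      exact h.trans_le (hl.getElem_ge_getElem_of_le (by grind))
    calc n < (l.take (n + 1)).length := by grind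
      _ = (l.take (n + 1)).countP (t < ·) := (countP_eq_length.mpr (by simpa using hprefix)).symm
      _ ≤ l.countP (t < ·) := (take_sublist _ _).countP_le
  · intro h
    by_contra! hle
    have hsuffix : (l.drop n).countP (t < ·) = 0 := by
      refine countP_eq_zero.mpr fun x hx => ?_
      obtain ⟨i, hi, rfl⟩ := getElem_of_mem hx
      rw [getElem_drop]
      simpa using (hl.getElem_ge_getElem_of_le (Nat.le_add_right n i)).trans hle
    have := (l.take n).countP_le_length (p := (t < ·))
    grind

end List

theorem lt_kthLargest_succ_iff (B : Multiset ℝ) (t : ℝ) {n : ℕ} (hn : n < Multiset.card B) :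
    t < kthLargest B (n + 1) ↔ n < B.countP (t < ·) := by
  have hsorted : (B.sort (· ≥ ·)).SortedGE := (B.pairwise_sort _).sortedGE
  have hlen : n < (B.sort (· ≥ ·)).length := by rwa [Multiset.length_sort]
  rw [kthLargest, Nat.add_sub_cancel, List.getD_eq_getElem _ _ hlen,
    hsorted.lt_getElem_iff_lt_countP t hlen, ← Multiset.coe_countP, Multiset.sort_eq]

/-- Strict part of Proposition 4: if a speculator's bid `b` exceeds the
`(k+1)`-th largest bid of `B`, and the `k`-th largest bid of `B` strictly
exceeds the `(k+1)`-th largest, then adding `b` strictly increases the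
clearing price. -/
theorem speculator_bid_strictly_increases_clearing_price (k : ℕ)
    (B : Multiset ℝ) (hcard : k + 1 ≤ Multiset.card B) (b : ℝ)
    (hb : kthLargest B (k + 1) < b)
    (hgap : kthLargest B (k + 1) < kthLargest B k) :
    kthLargest B (k + 1) < kthLargest (B + {b}) (k + 1) := by
  set t := kthLargest B (k + 1)
  obtain ⟨n, rfl⟩ : ∃ n, k = n + 1 := by
    refine Nat.exists_eq_add_one.mpr (Nat.pos_of_ne_zero ?_)
    rintro rfl
    -- `0 - 1 = 0` in `ℕ`, so `kthLargest B 0` is `kthLargest B 1`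
    exact hgap.ne rfl
  have hB : n < B.countP (t < ·) := (lt_kthLargest_succ_iff B t (by omega)).mp hgap
  have hBb : (B + {b}).countP (t < ·) = B.countP (t < ·) + 1 := by
    rw [Multiset.add_comm, Multiset.singleton_add, Multiset.countP_cons_of_pos _ hb]
  rw [lt_kthLargest_succ_iff _ t (by simp; omega), hBb]
  omega
end
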